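/- There is an absolute constant C such that |(∇_x K)(x,t)| ≤ C(t^{−3/2} e^{−|x|²/(16t)} + ∫_t^∞ s^{−5/2} e^{−|x|²/(16s)} ds) for all x ∈ ℝ² \ {0}, t > 0, where K(x,t) = G(x,t)𝕀 + ∫_t^∞ ∇²G(x,s) ds. -/

import Mathlib

open Real Set MeasureTheory

noncomputable def pd (i : Fin 2) (f : (Fin 2 → ℝ) → ℝ) (x : Fin 2 → ℝ) : ℝ :=
  fderiv ℝ f x (Pi.single i 1)

def nsq (x : Fin 2 → ℝ) : ℝ := x 0 ^ 2 + x 1 ^ 2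

noncomputable def heatG (x : Fin 2 → ℝ) (t : ℝ) : ℝ :=
  1 / (4 * π * t) * Real.exp (-(nsq x) / (4 * t))

/-- Entries of `K(x,t) = G(x,t)𝕀 + ∫_t^∞ ∇²G(x,s) ds`. -/
noncomputable def Kent (i j : Fin 2) (x : Fin 2 → ℝ) (t : ℝ) : ℝ :=
  (if i = j then 1 else 0) * heatG x t
    + ∫ s in Set.Ioi t, pd i (fun z => pd j (fun w => heatG w s) z) x

/-- `|∇ₓK(x,t)|`: sum of absolute values of all first `x`-derivatives of the entries. -/
noncomputable def gradK (x : Fin 2 → ℝ) (t : ℝ) : ℝ :=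
  ∑ i : Fin 2, ∑ j : Fin 2, ∑ k : Fin 2, |pd k (fun z => Kent i j z t) x|

/-!
Differentiating under the integral sign, `∂ₖKᵢⱼ(x,t) = δᵢⱼ ∂ₖG(x,t) + ∫_t^∞ ∂ₖ∂ᵢ∂ⱼG(x,s) ds`.
Every derivative of `G` is a polynomial in `x` and `1/s` times
`e^{-|x|²/(4s)} = (e^{-|x|²/(16s)})⁴`, and each of the first three factors absorbs one power
of `|x|` at the cost of `4√s`, since `u e^{-u²} ≤ 1`. This gives
`|∇G| ≤ t^{-3/2} e^{-|x|²/(16t)}` and `|∇³G| ≤ s^{-5/2} e^{-|x|²/(16s)}`; the latter, with the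
exponential dropped, is also the integrable majorant that justifies the differentiation.
Summing over the eight entries gives `C = 8`.
-/

section DotProduct

variable {ι : Type*} [Fintype ι]

def dotProductCLM (a : ι → ℝ) : (ι → ℝ) →L[ℝ] ℝ :=
  ∑ k, a k • ContinuousLinearMap.proj k

@[simp] lemma dotProductCLM_apply (a v : ι → ℝ) : dotProductCLM a v = a ⬝ᵥ v := by
  simp [dotProductCLM, dotProduct]

lemma dotProductCLM_single [DecidableEq ι] (a : ι → ℝ) (k : ι) :
    dotProductCLM a (Pi.single k 1) = a k := by
  simp [dotProduct_single]

lemma norm_dotProductCLM_le (a : ι → ℝ) : ‖dotProductCLM a‖ ≤ ∑ k, |a k| := by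
  refine ContinuousLinearMap.opNorm_le_bound _ (by positivity) fun v => ?_
  rw [dotProductCLM_apply, dotProduct, Finset.sum_mul]
  refine (norm_sum_le _ _).trans (Finset.sum_le_sum fun k _ => ?_)
  rw [norm_mul, Real.norm_eq_abs]
  exact mul_le_mul_of_nonneg_left (norm_le_pi_norm v k) (abs_nonneg _)

end DotProduct

lemma pd_eq_of_hasFDerivAt {f : (Fin 2 → ℝ) → ℝ} {L : (Fin 2 → ℝ) →L[ℝ] ℝ} {x : Fin 2 → ℝ}
    (h : HasFDerivAt f L x) (k : Fin 2) : pd k f x = L (Pi.single k 1) := by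
  rw [pd, h.fderiv]

lemma hasFDerivAt_exp_nsq (s : ℝ) (x : Fin 2 → ℝ) :
    HasFDerivAt (fun w => Real.exp (-(nsq w) / (4 * s)))
      (dotProductCLM fun k => -(x k) / (2 * s) * Real.exp (-(nsq x) / (4 * s))) x := by
  have hcoord (k : Fin 2) := hasFDerivAt_apply (𝕜 := ℝ) (F' := fun _ : Fin 2 => ℝ) k x
  have hexponent : HasFDerivAt (fun w => -(nsq w) / (4 * s))
      (dotProductCLM fun k => -(x k) / (2 * s)) x := by
    refine ((((hcoord 0).pow 2).add ((hcoord 1).pow 2)).const_mul (-(4 * s)⁻¹)).congr_fderiv ?_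
      |>.congr_of_eventuallyEq (.of_forall fun w => ?_)
    · ext v
      simp only [Nat.add_one_sub_one, pow_one, nsmul_eq_mul, Nat.cast_ofNat, smul_add, smul_eq_mul,
        add_apply, smul_apply, ContinuousLinearMap.proj_apply, dotProductCLM_apply,
        Matrix.vec2_dotProduct]
      ring
    · simp only [nsq, Pi.add_apply]
      ring
  refine hexponent.exp.congr_fderiv ?_
  ext v
  simp only [smul_apply, smul_eq_mul, dotProductCLM_apply, Matrix.vec2_dotProduct]
  ring

lemma HasFDerivAt.mul_exp_nsq {q : (Fin 2 → ℝ) → ℝ} {a x : Fin 2 → ℝ} (s : ℝ)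
    (hq : HasFDerivAt q (dotProductCLM a) x) :
    HasFDerivAt (fun w => q w * Real.exp (-(nsq w) / (4 * s)))
      (dotProductCLM fun k => (a k - q x * x k / (2 * s)) * Real.exp (-(nsq x) / (4 * s))) x := by
  refine (hq.mul (hasFDerivAt_exp_nsq s x)).congr_fderiv ?_
  ext v
  simp only [add_apply, smul_apply, smul_eq_mul, dotProductCLM_apply, Matrix.vec2_dotProduct]
  ring

/- `∂ⱼG = heatCoeff₁ j x s · e^{-|x|²/(4s)}`, `∂ᵢ∂ⱼG = heatCoeff₂ i j x s · e^{-|x|²/(4s)}` and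
`∂ₖ∂ᵢ∂ⱼG = heatCoeff₃ k i j x s · e^{-|x|²/(4s)}`. -/
noncomputable def heatCoeff₁ (j : Fin 2) (x : Fin 2 → ℝ) (s : ℝ) : ℝ :=
  -(x j) / (8 * π * s ^ 2)

noncomputable def heatCoeff₂ (i j : Fin 2) (x : Fin 2 → ℝ) (s : ℝ) : ℝ :=
  (x i * x j / (4 * s ^ 2) - (if i = j then 1 else 0) / (2 * s)) / (4 * π * s)

noncomputable def heatCoeff₃ (k i j : Fin 2) (x : Fin 2 → ℝ) (s : ℝ) : ℝ :=
  ((if i = k then x j else 0) + (if j = k then x i else 0)) / (16 * π * s ^ 3)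
    - heatCoeff₂ i j x s * x k / (2 * s)

lemma hasFDerivAt_heatG (s : ℝ) (x : Fin 2 → ℝ) :
    HasFDerivAt (fun w => heatG w s)
      (dotProductCLM fun k => heatCoeff₁ k x s * Real.exp (-(nsq x) / (4 * s))) x := by
  have hconst : HasFDerivAt (fun _ : Fin 2 → ℝ => 1 / (4 * π * s)) (dotProductCLM 0) x :=
    (hasFDerivAt_const _ x).congr_fderiv (by ext; simp)
  refine (hconst.mul_exp_nsq s).congr_fderiv ?_
  ext v
  simp only [Pi.zero_apply, zero_sub, dotProductCLM_apply, Matrix.vec2_dotProduct, heatCoeff₁]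
  field_simp
  ring

lemma pd_heatG (j : Fin 2) (s : ℝ) (x : Fin 2 → ℝ) :
    pd j (fun w => heatG w s) x = heatCoeff₁ j x s * Real.exp (-(nsq x) / (4 * s)) := by
  rw [pd_eq_of_hasFDerivAt (hasFDerivAt_heatG s x), dotProductCLM_single]

lemma hasFDerivAt_heatCoeff₁_mul_exp (j : Fin 2) (s : ℝ) (x : Fin 2 → ℝ) :
    HasFDerivAt (fun w => heatCoeff₁ j w s * Real.exp (-(nsq w) / (4 * s)))
      (dotProductCLM fun k => heatCoeff₂ k j x s * Real.exp (-(nsq x) / (4 * s))) x := by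
  have hlin : (fun w => heatCoeff₁ j w s)
      = dotProductCLM (Pi.single j (-1 / (8 * π * s ^ 2))) := by
    ext w
    simp only [heatCoeff₁, dotProductCLM_apply, single_dotProduct]
    ring
  have hq : HasFDerivAt (fun w => heatCoeff₁ j w s) _ x := hlin ▸ ContinuousLinearMap.hasFDerivAt _
  refine (hq.mul_exp_nsq s).congr_fderiv (congrArg dotProductCLM (funext fun k => ?_))
  rcases eq_or_ne k j with rfl | hkj
  · simp only [heatCoeff₁, heatCoeff₂, if_pos, Pi.single_eq_same]
    field_simp
    ring
  · simp only [heatCoeff₁, heatCoeff₂, if_neg hkj, Pi.single_eq_of_ne hkj]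
    field_simp
    ring

lemma pd_pd_heatG (i j : Fin 2) (s : ℝ) (x : Fin 2 → ℝ) :
    pd i (fun z => pd j (fun w => heatG w s) z) x
      = heatCoeff₂ i j x s * Real.exp (-(nsq x) / (4 * s)) := by
  simp only [pd_heatG]
  rw [pd_eq_of_hasFDerivAt (hasFDerivAt_heatCoeff₁_mul_exp j s x), dotProductCLM_single]

lemma hasFDerivAt_heatCoeff₂_mul_exp (i j : Fin 2) (s : ℝ) (x : Fin 2 → ℝ) :
    HasFDerivAt (fun w => heatCoeff₂ i j w s * Real.exp (-(nsq w) / (4 * s)))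
      (dotProductCLM fun k => heatCoeff₃ k i j x s * Real.exp (-(nsq x) / (4 * s))) x := by
  have hcoord (k : Fin 2) := hasFDerivAt_apply (𝕜 := ℝ) (F' := fun _ : Fin 2 => ℝ) k x
  have hq : HasFDerivAt (fun w => heatCoeff₂ i j w s) (dotProductCLM fun k =>
      ((if i = k then x j else 0) + (if j = k then x i else 0)) / (16 * π * s ^ 3)) x := by
    have hlin := (((hcoord i).mul (hcoord j)).const_mul (4 * s ^ 2)⁻¹).sub_const
      ((if i = j then 1 else 0) / (2 * s)) |>.const_mul (4 * π * s)⁻¹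
    refine (hlin.congr_fderiv ?_).congr_of_eventuallyEq (.of_forall fun w => ?_)
    · ext v
      fin_cases i <;> fin_cases j <;> simp <;> ring
    · simp only [heatCoeff₂, Pi.mul_apply]
      ring
  exact hq.mul_exp_nsq s

lemma nsq_nonneg (x : Fin 2 → ℝ) : 0 ≤ nsq x := by
  unfold nsq
  positivity

lemma abs_le_sqrt_nsq (x : Fin 2 → ℝ) (k : Fin 2) : |x k| ≤ √(nsq x) := by
  rw [← Real.sqrt_sq_eq_abs]
  refine Real.sqrt_le_sqrt ?_
  fin_cases k <;> simp [nsq] <;> positivity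

lemma exp_neg_nsq_div_le_one (x : Fin 2 → ℝ) {c : ℝ} (hc : 0 ≤ c) :
    Real.exp (-(nsq x) / c) ≤ 1 :=
  Real.exp_le_one_iff.2 (div_nonpos_of_nonpos_of_nonneg (neg_nonpos.2 (nsq_nonneg x)) hc)

lemma mul_exp_neg_sq_le_one {u : ℝ} (hu : 0 ≤ u) : u * Real.exp (-u ^ 2) ≤ 1 := by
  have hu_le : u ≤ Real.exp (u ^ 2) := by nlinarith [Real.add_one_le_exp (u ^ 2)]
  calc u * Real.exp (-u ^ 2) ≤ Real.exp (u ^ 2) * Real.exp (-u ^ 2) := by gcongr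
    _ = 1 := by rw [← Real.exp_add, add_neg_cancel, Real.exp_zero]

lemma sqrt_nsq_mul_exp_le {s : ℝ} (hs : 0 < s) (x : Fin 2 → ℝ) :
    √(nsq x) * Real.exp (-(nsq x) / (16 * s)) ≤ 4 * √s := by
  set u := √(nsq x) / (4 * √s)
  have hexponent : -(nsq x) / (16 * s) = -u ^ 2 := by
    rw [div_pow, mul_pow, Real.sq_sqrt (nsq_nonneg x), Real.sq_sqrt hs.le]
    ring
  have hsqrt_nsq : √(nsq x) = 4 * √s * u := by
    simp only [u]
    field_simp
  rw [hexponent, hsqrt_nsq, mul_assoc]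
  exact mul_le_of_le_one_right (by positivity) (mul_exp_neg_sq_le_one (by positivity))

lemma sqrt_nsq_pow_mul_exp_le {s : ℝ} (hs : 0 < s) (x : Fin 2 → ℝ) {n : ℕ} (hn : n ≤ 3) :
    √(nsq x) ^ n * Real.exp (-(nsq x) / (4 * s))
      ≤ (4 * √s) ^ n * Real.exp (-(nsq x) / (16 * s)) := by
  set e := Real.exp (-(nsq x) / (16 * s))
  have he1 : e ≤ 1 := exp_neg_nsq_div_le_one x (by positivity)
  have hsplit : Real.exp (-(nsq x) / (4 * s)) = e ^ n * e ^ (4 - n) := by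
    rw [← pow_add, Nat.add_sub_cancel' (by omega), ← Real.exp_nat_mul]
    push_cast
    ring_nf
  rw [hsplit, ← mul_assoc, ← mul_pow]
  exact mul_le_mul (pow_le_pow_left₀ (by positivity) (sqrt_nsq_mul_exp_le hs x) n)
    (pow_le_of_le_one (Real.exp_pos _).le he1 (by omega)) (by positivity) (by positivity)

lemma sqrt_div_pow_eq_rpow {s : ℝ} (hs : 0 < s) (n : ℕ) : √s / s ^ n = s ^ ((1 : ℝ) / 2 - n) := by
  rw [Real.sqrt_eq_rpow, ← Real.rpow_natCast, ← Real.rpow_sub hs]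

lemma abs_heatCoeff₁_mul_exp_le {t : ℝ} (ht : 0 < t) (k : Fin 2) (x : Fin 2 → ℝ) :
    |heatCoeff₁ k x t * Real.exp (-(nsq x) / (4 * t))|
      ≤ t ^ (-(3 : ℝ) / 2) * Real.exp (-(nsq x) / (16 * t)) := by
  have hrpow : t ^ (-(3 : ℝ) / 2) = √t / t ^ 2 := by
    rw [sqrt_div_pow_eq_rpow ht]
    norm_num
  have hpi : 1 / (2 * π) ≤ 1 := by
    rw [div_le_one (by positivity)]
    linarith [Real.pi_gt_three]
  rw [hrpow]
  calc |heatCoeff₁ k x t * Real.exp (-(nsq x) / (4 * t))|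
      = |x k| * Real.exp (-(nsq x) / (4 * t)) / (8 * π * t ^ 2) := by
        rw [heatCoeff₁, abs_mul, abs_div, abs_neg, abs_of_pos (Real.exp_pos _),
          abs_of_pos (by positivity : (0 : ℝ) < 8 * π * t ^ 2)]
        ring
    _ ≤ √(nsq x) ^ 1 * Real.exp (-(nsq x) / (4 * t)) / (8 * π * t ^ 2) := by
        rw [pow_one]
        gcongr
        exact abs_le_sqrt_nsq x k
    _ ≤ (4 * √t) ^ 1 * Real.exp (-(nsq x) / (16 * t)) / (8 * π * t ^ 2) := by
        gcongr ?_ / _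
        exact sqrt_nsq_pow_mul_exp_le ht x (n := 1) (by norm_num)
    _ = √t / t ^ 2 * Real.exp (-(nsq x) / (16 * t)) * (1 / (2 * π)) := by
        field_simp
        ring
    _ ≤ √t / t ^ 2 * Real.exp (-(nsq x) / (16 * t)) := mul_le_of_le_one_right (by positivity) hpi

lemma abs_heatCoeff₂_le {s : ℝ} (hs : 0 < s) (i j : Fin 2) (x : Fin 2 → ℝ) :
    |heatCoeff₂ i j x s| ≤ (√(nsq x) ^ 2 / (4 * s ^ 2) + 1 / (2 * s)) / (4 * π * s) := by
  rw [heatCoeff₂, abs_div, abs_of_pos (by positivity : (0 : ℝ) < 4 * π * s)]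
  gcongr
  refine (abs_sub _ _).trans (add_le_add ?_ ?_)
  · rw [abs_div, abs_mul, abs_of_pos (by positivity : (0 : ℝ) < 4 * s ^ 2)]
    gcongr
    calc |x i| * |x j| ≤ √(nsq x) * √(nsq x) :=
          mul_le_mul (abs_le_sqrt_nsq x i) (abs_le_sqrt_nsq x j) (abs_nonneg _) (Real.sqrt_nonneg _)
      _ = √(nsq x) ^ 2 := (sq _).symm
  · rw [abs_div, abs_of_pos (by positivity : (0 : ℝ) < 2 * s)]
    gcongr
    split_ifs <;> simp

lemma abs_heatCoeff₃_le {s : ℝ} (hs : 0 < s) (k i j : Fin 2) (x : Fin 2 → ℝ) :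
    |heatCoeff₃ k i j x s| ≤ 3 * √(nsq x) / (16 * π * s ^ 3) + √(nsq x) ^ 3 / (32 * π * s ^ 4) := by
  set r := √(nsq x)
  have hr : 0 ≤ r := Real.sqrt_nonneg _
  have hdelta (a b : Fin 2) : |if a = k then x b else 0| ≤ r := by
    split_ifs
    · exact abs_le_sqrt_nsq x b
    · simpa using hr
  calc |heatCoeff₃ k i j x s|
      ≤ (r + r) / (16 * π * s ^ 3)
          + (r ^ 2 / (4 * s ^ 2) + 1 / (2 * s)) / (4 * π * s) * r / (2 * s) := by
        refine (abs_sub _ _).trans (add_le_add ?_ ?_)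
        · rw [abs_div, abs_of_pos (by positivity : (0 : ℝ) < 16 * π * s ^ 3)]
          gcongr
          exact (abs_add_le _ _).trans (add_le_add (hdelta i j) (hdelta j i))
        · rw [abs_div, abs_mul, abs_of_pos (by positivity : (0 : ℝ) < 2 * s)]
          gcongr
          · exact abs_heatCoeff₂_le hs i j x
          · exact abs_le_sqrt_nsq x k
    _ = 3 * r / (16 * π * s ^ 3) + r ^ 3 / (32 * π * s ^ 4) := by
        field_simp
        ring

lemma abs_heatCoeff₃_mul_exp_le {s : ℝ} (hs : 0 < s) (k i j : Fin 2) (x : Fin 2 → ℝ) :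
    |heatCoeff₃ k i j x s * Real.exp (-(nsq x) / (4 * s))|
      ≤ s ^ (-(5 : ℝ) / 2) * Real.exp (-(nsq x) / (16 * s)) := by
  have hrpow : s ^ (-(5 : ℝ) / 2) = √s / s ^ 3 := by
    rw [sqrt_div_pow_eq_rpow hs]
    norm_num
  have hpi : 11 / (4 * π) ≤ 1 := by
    rw [div_le_one (by positivity)]
    linarith [Real.pi_gt_three]
  have hsqrt_cube : √s ^ 3 = s * √s := by
    rw [pow_succ, sq, Real.mul_self_sqrt hs.le]
  rw [hrpow, abs_mul, abs_of_pos (Real.exp_pos _)]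
  set E := Real.exp (-(nsq x) / (4 * s))
  set e := Real.exp (-(nsq x) / (16 * s))
  calc |heatCoeff₃ k i j x s| * E
      ≤ (3 * √(nsq x) / (16 * π * s ^ 3) + √(nsq x) ^ 3 / (32 * π * s ^ 4)) * E := by
        gcongr
        exact abs_heatCoeff₃_le hs k i j x
    _ = 3 * (√(nsq x) ^ 1 * E) / (16 * π * s ^ 3) + √(nsq x) ^ 3 * E / (32 * π * s ^ 4) := by
        ring
    _ ≤ 3 * ((4 * √s) ^ 1 * e) / (16 * π * s ^ 3) + (4 * √s) ^ 3 * e / (32 * π * s ^ 4) := by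
        gcongr 3 * ?_ / _ + ?_ / _
        · exact sqrt_nsq_pow_mul_exp_le hs x (n := 1) (by norm_num)
        · exact sqrt_nsq_pow_mul_exp_le hs x (n := 3) (by norm_num)
    _ = √s / s ^ 3 * e * (11 / (4 * π)) := by
        rw [mul_pow (4 : ℝ) √s 3, hsqrt_cube]
        field_simp
        ring
    _ ≤ √s / s ^ 3 * e := mul_le_of_le_one_right (by positivity) hpi

lemma abs_heatCoeff₂_mul_exp_le {s : ℝ} (hs : 0 < s) (i j : Fin 2) (x : Fin 2 → ℝ) :
    |heatCoeff₂ i j x s * Real.exp (-(nsq x) / (4 * s))| ≤ s ^ (-2 : ℝ) := by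
  have hpi : 9 / (8 * π) ≤ 1 := by
    rw [div_le_one (by positivity)]
    linarith [Real.pi_gt_three]
  have he1 : Real.exp (-(nsq x) / (16 * s)) ≤ 1 := exp_neg_nsq_div_le_one x (by positivity)
  have hE1 : Real.exp (-(nsq x) / (4 * s)) ≤ 1 := exp_neg_nsq_div_le_one x (by positivity)
  rw [Real.rpow_neg hs.le, Real.rpow_two, abs_mul, abs_of_pos (Real.exp_pos _)]
  set E := Real.exp (-(nsq x) / (4 * s))
  calc |heatCoeff₂ i j x s| * E
      ≤ (√(nsq x) ^ 2 / (4 * s ^ 2) + 1 / (2 * s)) / (4 * π * s) * E := by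
        gcongr
        exact abs_heatCoeff₂_le hs i j x
    _ = (√(nsq x) ^ 2 * E / (4 * s ^ 2) + E / (2 * s)) / (4 * π * s) := by
        ring
    _ ≤ ((4 * √s) ^ 2 * 1 / (4 * s ^ 2) + 1 / (2 * s)) / (4 * π * s) := by
        gcongr (?_ / _ + ?_ / _) / _
        exact (sqrt_nsq_pow_mul_exp_le hs x (n := 2) (by norm_num)).trans
          (mul_le_mul_of_nonneg_left he1 (by positivity))
    _ = (s ^ 2)⁻¹ * (9 / (8 * π)) := by
        rw [mul_pow, Real.sq_sqrt hs.le]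
        field_simp
        ring
    _ ≤ (s ^ 2)⁻¹ := mul_le_of_le_one_right (by positivity) hpi

lemma integrableOn_rpow_mul_exp_nsq {a t : ℝ} (ha : a < -1) (ht : 0 < t) (x : Fin 2 → ℝ) :
    IntegrableOn (fun s => s ^ a * Real.exp (-(nsq x) / (16 * s))) (Ioi t) := by
  refine (integrableOn_Ioi_rpow_of_lt ha ht).mul_bdd (c := 1)
    (by fun_prop : Measurable fun s : ℝ => Real.exp (-(nsq x) / (16 * s))).aestronglyMeasurable
    (ae_restrict_of_forall_mem measurableSet_Ioi fun s hs => ?_)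
  rw [Real.norm_eq_abs, abs_of_pos (Real.exp_pos _)]
  exact exp_neg_nsq_div_le_one x (by linarith [mem_Ioi.1 hs])

lemma integrableOn_heatCoeff₂_mul_exp {t : ℝ} (ht : 0 < t) (i j : Fin 2) (x : Fin 2 → ℝ) :
    IntegrableOn (fun s => heatCoeff₂ i j x s * Real.exp (-(nsq x) / (4 * s))) (Ioi t) := by
  refine (integrableOn_Ioi_rpow_of_lt (by norm_num : (-2 : ℝ) < -1) ht).mono'
    (by unfold heatCoeff₂; fun_prop) (ae_restrict_of_forall_mem measurableSet_Ioi fun s hs => ?_)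
  exact abs_heatCoeff₂_mul_exp_le (ht.trans hs) i j x

lemma norm_dotProductCLM_heatCoeff₃_le {s : ℝ} (hs : 0 < s) (i j : Fin 2) (x : Fin 2 → ℝ) :
    ‖dotProductCLM fun k => heatCoeff₃ k i j x s * Real.exp (-(nsq x) / (4 * s))‖
      ≤ 2 * s ^ (-(5 : ℝ) / 2) := by
  have hbound (k : Fin 2) : |heatCoeff₃ k i j x s * Real.exp (-(nsq x) / (4 * s))|
      ≤ s ^ (-(5 : ℝ) / 2) :=
    (abs_heatCoeff₃_mul_exp_le hs k i j x).trans <| mul_le_of_le_one_right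
      (Real.rpow_nonneg hs.le _) (exp_neg_nsq_div_le_one x (by positivity))
  refine (norm_dotProductCLM_le _).trans ?_
  rw [Fin.sum_univ_two]
  linarith [hbound 0, hbound 1]

lemma integrableOn_dotProductCLM_heatCoeff₃ {t : ℝ} (ht : 0 < t) (i j : Fin 2) (x : Fin 2 → ℝ) :
    IntegrableOn (fun s => dotProductCLM fun k =>
      heatCoeff₃ k i j x s * Real.exp (-(nsq x) / (4 * s))) (Ioi t) := by
  refine ((integrableOn_Ioi_rpow_of_lt (by norm_num : -(5 : ℝ) / 2 < -1) ht).const_mul 2).mono'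
    (by unfold dotProductCLM heatCoeff₃ heatCoeff₂; fun_prop)
    (ae_restrict_of_forall_mem measurableSet_Ioi fun s hs => ?_)
  exact norm_dotProductCLM_heatCoeff₃_le (ht.trans hs) i j x

lemma hasFDerivAt_integral_heatCoeff₂_mul_exp {t : ℝ} (ht : 0 < t) (i j : Fin 2)
    (x : Fin 2 → ℝ) :
    HasFDerivAt (fun z => ∫ s in Ioi t, heatCoeff₂ i j z s * Real.exp (-(nsq z) / (4 * s)))
      (∫ s in Ioi t, dotProductCLM fun k =>
        heatCoeff₃ k i j x s * Real.exp (-(nsq x) / (4 * s))) x := by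
  refine hasFDerivAt_integral_of_dominated_of_fderiv_le (μ := volume.restrict (Ioi t))
    (F := fun z s => heatCoeff₂ i j z s * Real.exp (-(nsq z) / (4 * s))) Filter.univ_mem
    (.of_forall fun _ => (by unfold heatCoeff₂; fun_prop : Measurable _).aestronglyMeasurable)
    (integrableOn_heatCoeff₂_mul_exp ht i j x)
    (integrableOn_dotProductCLM_heatCoeff₃ ht i j x).aestronglyMeasurable
    (ae_restrict_of_forall_mem measurableSet_Ioi fun s hs z _ =>
      norm_dotProductCLM_heatCoeff₃_le (ht.trans hs) i j z) ?_
    (ae_of_all _ fun s z _ => hasFDerivAt_heatCoeff₂_mul_exp i j s z)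
  exact (integrableOn_Ioi_rpow_of_lt (by norm_num : -(5 : ℝ) / 2 < -1) ht).const_mul 2

lemma pd_Kent {t : ℝ} (ht : 0 < t) (i j k : Fin 2) (x : Fin 2 → ℝ) :
    pd k (fun z => Kent i j z t) x
      = (if i = j then 1 else 0) * (heatCoeff₁ k x t * Real.exp (-(nsq x) / (4 * t)))
        + ∫ s in Ioi t, heatCoeff₃ k i j x s * Real.exp (-(nsq x) / (4 * s)) := by
  have hKent : (fun z => Kent i j z t) = fun z => (if i = j then 1 else 0) * heatG z t
      + ∫ s in Ioi t, heatCoeff₂ i j z s * Real.exp (-(nsq z) / (4 * s)) := by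
    funext z
    simp only [Kent, pd_pd_heatG]
  rw [hKent, pd_eq_of_hasFDerivAt (((hasFDerivAt_heatG t x).const_mul _).fun_add
      (hasFDerivAt_integral_heatCoeff₂_mul_exp ht i j x)),
    add_apply, smul_apply,
    ContinuousLinearMap.integral_apply (integrableOn_dotProductCLM_heatCoeff₃ ht i j x)]
  simp only [dotProductCLM_single, smul_eq_mul]

lemma abs_pd_Kent_le {t : ℝ} (ht : 0 < t) (i j k : Fin 2) (x : Fin 2 → ℝ) :
    |pd k (fun z => Kent i j z t) x|
      ≤ t ^ (-(3 : ℝ) / 2) * Real.exp (-(nsq x) / (16 * t))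
        + ∫ s in Ioi t, s ^ (-(5 : ℝ) / 2) * Real.exp (-(nsq x) / (16 * s)) := by
  have hdelta : |(if i = j then 1 else 0 : ℝ)| ≤ 1 := by
    split_ifs <;> simp
  rw [pd_Kent ht]
  refine (abs_add_le _ _).trans (add_le_add ?_ ?_)
  · rw [abs_mul]
    exact mul_le_of_le_one_left (abs_nonneg _) hdelta |>.trans (abs_heatCoeff₁_mul_exp_le ht k x)
  · refine norm_integral_le_of_norm_le (f := fun s =>
      heatCoeff₃ k i j x s * Real.exp (-(nsq x) / (4 * s)))
      (integrableOn_rpow_mul_exp_nsq (by norm_num : -(5 : ℝ) / 2 < -1) ht x)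
      (ae_restrict_of_forall_mem measurableSet_Ioi fun s hs => ?_)
    exact abs_heatCoeff₃_mul_exp_le (ht.trans hs) k i j x

/-- Pointwise bound
`|∇K(x,t)| ≤ C(t^{−3/2} e^{−|x|²/(16t)} + ∫_t^∞ s^{−5/2} e^{−|x|²/(16s)} ds)`. -/
theorem gradK_pointwise_bound :
    ∃ C : ℝ, 0 < C ∧ ∀ x : Fin 2 → ℝ, x ≠ 0 → ∀ t : ℝ, 0 < t →
      gradK x t ≤ C * (t ^ (-(3 : ℝ) / 2) * Real.exp (-(nsq x) / (16 * t))
        + ∫ s in Set.Ioi t, s ^ (-(5 : ℝ) / 2) * Real.exp (-(nsq x) / (16 * s))) := by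
  refine ⟨8, by norm_num, fun x _ t ht => ?_⟩
  calc gradK x t
      ≤ ∑ _i : Fin 2, ∑ _j : Fin 2, ∑ _k : Fin 2,
          (t ^ (-(3 : ℝ) / 2) * Real.exp (-(nsq x) / (16 * t))
            + ∫ s in Ioi t, s ^ (-(5 : ℝ) / 2) * Real.exp (-(nsq x) / (16 * s))) := by
        unfold gradK
        gcongr with i _ j _ k _
        exact abs_pd_Kent_le ht i j k x
    _ = 8 * (t ^ (-(3 : ℝ) / 2) * Real.exp (-(nsq x) / (16 * t))
          + ∫ s in Ioi t, s ^ (-(5 : ℝ) / 2) * Real.exp (-(nsq x) / (16 * s))) := by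
        simp only [Finset.sum_const, Finset.card_univ, Fintype.card_fin, nsmul_eq_mul]
        ring
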